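/- Let H(R, φ, z) be a generalized Weyl algebra with z a central non-zero-divisor of R, and let R_φ[x, x⁻¹] denote the φ-twisted Laurent polynomial ring over R, i.e. the ring of Laurent polynomials in x over R with multiplication twisted by the rule xr = φ⁻¹(r)x for r ∈ R. Then there is an injective ring homomorphism H(R, φ, z) → R_φ[x, x⁻¹] which is the identity on R and sends x ↦ x and y ↦ z·x⁻¹; its image is the subring of R_φ[x, x⁻¹] generated by R, x, and z·x⁻¹, and inverting x in this image recovers all of R_φ[x, x⁻¹] (every element of R_φ[x, x⁻¹] has the form h·x^{−n} with h in the image and n ≥ 0). -/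

import Mathlib

universe u

variable (R : Type u) [Ring R] (φ : R ≃+* R) (z : R)

/-- The defining relations of the generalized Weyl algebra `H(R, φ, z)`, presented as a quotient
of the free `ℤ`-algebra on the underlying set of `R` together with two generators `x` (encoded
as `Sum.inr 0`) and `y` (encoded as `Sum.inr 1`).  The first three families of relations encode
the ring structure of `R`; the remaining ones are the GWA relations
`yx = z`, `xy = φ⁻¹(z)`, `xr = φ⁻¹(r)x`, `yr = φ(r)y`. -/
inductive GWARel : FreeAlgebra ℤ (R ⊕ Fin 2) → FreeAlgebra ℤ (R ⊕ Fin 2) → Prop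
  | add (r s : R) : GWARel
      (FreeAlgebra.ι ℤ (Sum.inl r) + FreeAlgebra.ι ℤ (Sum.inl s))
      (FreeAlgebra.ι ℤ (Sum.inl (r + s)))
  | mul (r s : R) : GWARel
      (FreeAlgebra.ι ℤ (Sum.inl r) * FreeAlgebra.ι ℤ (Sum.inl s))
      (FreeAlgebra.ι ℤ (Sum.inl (r * s)))
  | one : GWARel (FreeAlgebra.ι ℤ (Sum.inl (1 : R))) 1
  | yx : GWARel (FreeAlgebra.ι ℤ (Sum.inr 1) * FreeAlgebra.ι ℤ (Sum.inr 0))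
      (FreeAlgebra.ι ℤ (Sum.inl z))
  | xy : GWARel (FreeAlgebra.ι ℤ (Sum.inr 0) * FreeAlgebra.ι ℤ (Sum.inr 1))
      (FreeAlgebra.ι ℤ (Sum.inl (φ.symm z)))
  | xr (r : R) : GWARel (FreeAlgebra.ι ℤ (Sum.inr 0) * FreeAlgebra.ι ℤ (Sum.inl r))
      (FreeAlgebra.ι ℤ (Sum.inl (φ.symm r)) * FreeAlgebra.ι ℤ (Sum.inr 0))
  | yr (r : R) : GWARel (FreeAlgebra.ι ℤ (Sum.inr 1) * FreeAlgebra.ι ℤ (Sum.inl r))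
      (FreeAlgebra.ι ℤ (Sum.inl (φ r)) * FreeAlgebra.ι ℤ (Sum.inr 1))

/-- The generalized Weyl algebra `H(R, φ, z)`. -/
abbrev GWA : Type u := RingQuot (GWARel R φ z)

/-- The generator `x` of the generalized Weyl algebra. -/
noncomputable def GWA.X : GWA R φ z :=
  RingQuot.mkRingHom (GWARel R φ z) (FreeAlgebra.ι ℤ (Sum.inr 0))

/-- The generator `y` of the generalized Weyl algebra. -/
noncomputable def GWA.Y : GWA R φ z :=
  RingQuot.mkRingHom (GWARel R φ z) (FreeAlgebra.ι ℤ (Sum.inr 1))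

/-- The canonical ring homomorphism `R → H(R, φ, z)`. -/
noncomputable def GWA.ofBase : R →+* GWA R φ z where
  toFun r := RingQuot.mkRingHom (GWARel R φ z) (FreeAlgebra.ι ℤ (Sum.inl r))
  map_one' := by
    have := RingQuot.mkRingHom_rel (GWARel.one (R := R) (φ := φ) (z := z))
    simpa using this
  map_mul' r s := by
    have := RingQuot.mkRingHom_rel (GWARel.mul (φ := φ) (z := z) r s)
    simp only [map_mul] at this
    exact this.symm
  map_zero' := by
    have := RingQuot.mkRingHom_rel (GWARel.add (φ := φ) (z := z) 0 0)
    simp only [map_add, add_zero] at this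
    exact add_eq_left.mp this
  map_add' r s := by
    have := RingQuot.mkRingHom_rel (GWARel.add (φ := φ) (z := z) r s)
    simp only [map_add] at this
    exact this.symm

/-- The defining relations of the `φ`-twisted Laurent polynomial ring `R_φ[x, x⁻¹]`, presented
as a quotient of the free `ℤ`-algebra on the underlying set of `R` together with two generators
`x` (encoded as `Sum.inr true`) and `x⁻¹` (encoded as `Sum.inr false`).  The first three
families of relations encode the ring structure of `R`; the remaining ones say that `x` and
`x⁻¹` are mutually inverse and that `x·r = φ⁻¹(r)·x`. -/
inductive LaurentRel : FreeAlgebra ℤ (R ⊕ Bool) → FreeAlgebra ℤ (R ⊕ Bool) → Prop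
  | add (r s : R) : LaurentRel
      (FreeAlgebra.ι ℤ (Sum.inl r) + FreeAlgebra.ι ℤ (Sum.inl s))
      (FreeAlgebra.ι ℤ (Sum.inl (r + s)))
  | mul (r s : R) : LaurentRel
      (FreeAlgebra.ι ℤ (Sum.inl r) * FreeAlgebra.ι ℤ (Sum.inl s))
      (FreeAlgebra.ι ℤ (Sum.inl (r * s)))
  | one : LaurentRel (FreeAlgebra.ι ℤ (Sum.inl (1 : R))) 1
  | xxinv : LaurentRel (FreeAlgebra.ι ℤ (Sum.inr true) * FreeAlgebra.ι ℤ (Sum.inr false)) 1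
  | xinvx : LaurentRel (FreeAlgebra.ι ℤ (Sum.inr false) * FreeAlgebra.ι ℤ (Sum.inr true)) 1
  | xr (r : R) : LaurentRel (FreeAlgebra.ι ℤ (Sum.inr true) * FreeAlgebra.ι ℤ (Sum.inl r))
      (FreeAlgebra.ι ℤ (Sum.inl (φ.symm r)) * FreeAlgebra.ι ℤ (Sum.inr true))

/-- The `φ`-twisted Laurent polynomial ring `R_φ[x, x⁻¹]`. -/
abbrev TwistedLaurent : Type u := RingQuot (LaurentRel R φ)

/-- The element `x` of the twisted Laurent polynomial ring. -/
noncomputable def TwistedLaurent.x : TwistedLaurent R φ :=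
  RingQuot.mkRingHom (LaurentRel R φ) (FreeAlgebra.ι ℤ (Sum.inr true))

/-- The element `x⁻¹` of the twisted Laurent polynomial ring. -/
noncomputable def TwistedLaurent.xinv : TwistedLaurent R φ :=
  RingQuot.mkRingHom (LaurentRel R φ) (FreeAlgebra.ι ℤ (Sum.inr false))

/-- The canonical ring homomorphism `R → R_φ[x, x⁻¹]`. -/
noncomputable def TwistedLaurent.ofBase : R →+* TwistedLaurent R φ where
  toFun r := RingQuot.mkRingHom (LaurentRel R φ) (FreeAlgebra.ι ℤ (Sum.inl r))
  map_one' := by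
    have := RingQuot.mkRingHom_rel (LaurentRel.one (R := R) (φ := φ))
    simpa using this
  map_mul' r s := by
    have := RingQuot.mkRingHom_rel (LaurentRel.mul (φ := φ) r s)
    simp only [map_mul] at this
    exact this.symm
  map_zero' := by
    have := RingQuot.mkRingHom_rel (LaurentRel.add (φ := φ) (0 : R) 0)
    simp only [map_add, add_zero] at this
    exact add_eq_left.mp this
  map_add' r s := by
    have := RingQuot.mkRingHom_rel (LaurentRel.add (φ := φ) r s)
    simp only [map_add] at this
    exact this.symm

/-!
The homomorphism `θ` comes from the universal property of `H(R, φ, z)`; centrality of `z` is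
what makes `y ↦ z x⁻¹` respect `yr = φ(r)y`. Every element of `H(R, φ, z)` is a sum of terms
`r v_k`, where `v_k = X^k` for `k ≥ 0` and `v_k = Y^(-k)` for `k < 0`: these sums contain `1` and
are stable under left multiplication by the generators. Now `θ (r v_k) = r c_k x^k` where `c_k` is
a product of the `φ^i(z)`, hence not a right zero divisor, and the coefficients of `θ v` can be
read off in a faithful representation of `R_φ[x, x⁻¹]` on `ℤ →₀ R`; this gives injectivity.
Finally, for every `w` in `R_φ[x, x⁻¹]` we have `x^a w x^b ∈ im θ` as soon as `a + b` is large
enough: this holds for `r ∈ R` (conjugation by powers of `x` preserves `R`), for `x` and `x⁻¹`,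
and is stable under sums and products. Taking `a = 0` gives `w x^n ∈ im θ`.
-/

theorem pow_mul_eq_mul_pow_of_mul_eq {R S : Type*} [Monoid S] (f : R → S) (σ : R → R) (a : S)
    (h : ∀ r, a * f r = f (σ r) * a) (n : ℕ) (r : R) : a ^ n * f r = f (σ^[n] r) * a ^ n := by
  induction n generalizing r with
  | zero => simp
  | succ n ih =>
    rw [pow_succ, mul_assoc, h, ← mul_assoc, ih, Function.iterate_succ_apply, mul_assoc]

theorem MulEquiv.map_mem_nonZeroDivisorsRight {M₀ N₀ : Type*} [MonoidWithZero M₀]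
    [MonoidWithZero N₀] (f : M₀ ≃* N₀) {r : M₀} (hr : r ∈ nonZeroDivisorsRight M₀) :
    f r ∈ nonZeroDivisorsRight N₀ := fun y hy =>
  f.symm.injective (by simpa using hr (f.symm y) (by simpa using congrArg f.symm hy))

theorem Units.conj_zpow_mem {M : Type*} [Monoid M] (u : Mˣ) {s : Set M}
    (hs : ∀ r ∈ s, ↑u * r * ↑u⁻¹ ∈ s ∧ ↑u⁻¹ * r * ↑u ∈ s) (a : ℤ) :
    ∀ r ∈ s, ↑(u ^ a) * r * ↑(u ^ a)⁻¹ ∈ s := by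
  induction a using Int.induction_on with
  | zero => simp
  | succ a ih =>
    intro r hr
    simpa only [zpow_add_one, Units.val_mul, mul_inv_rev, mul_assoc] using ih _ (hs r hr).1
  | pred a ih =>
    intro r hr
    simpa only [zpow_sub_one, Units.val_mul, mul_inv_rev, inv_inv, mul_assoc]
      using ih _ (hs r hr).2

theorem Subring.exists_forall_zpow_mul_mul_zpow_mem {S : Type*} [Ring S] (A : Subring S)
    (u : Sˣ) (hu : (u : S) ∈ A) (s : Set S) (hsA : s ⊆ A)
    (hs : ∀ r ∈ s, ↑u * r * ↑u⁻¹ ∈ s ∧ ↑u⁻¹ * r * ↑u ∈ s)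
    (hgen : Subring.closure (s ∪ {↑u, ↑u⁻¹}) = ⊤) (w : S) :
    ∃ N : ℤ, ∀ a b : ℤ, N ≤ a + b → ↑(u ^ a) * w * ↑(u ^ b) ∈ A := by
  have hpow (k : ℤ) (hk : 0 ≤ k) : (↑(u ^ k) : S) ∈ A := by
    lift k to ℕ using hk
    simpa using pow_mem hu k
  have hval (a b : ℤ) : (↑(u ^ a) : S) * ↑(u ^ b) = ↑(u ^ (a + b)) := by
    rw [← Units.val_mul, zpow_add]
  have hw : w ∈ Subring.closure (s ∪ {↑u, ↑u⁻¹}) := hgen ▸ Subring.mem_top w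
  induction hw using Subring.closure_induction with
  | mem r hr =>
    rcases hr with hr | rfl | rfl
    · refine ⟨0, fun a b hab => ?_⟩
      have : ↑(u ^ a) * r * ↑(u ^ b) = (↑(u ^ a) * r * ↑(u ^ a)⁻¹) * ↑(u ^ (a + b)) := by
        rw [mul_assoc _ _ (↑(u ^ (a + b)) : S), ← Units.val_mul, zpow_add, inv_mul_cancel_left]
      rw [this]
      exact mul_mem (hsA (u.conj_zpow_mem hs a r hr)) (hpow _ hab)
    · exact ⟨-1, fun a b hab => by
        rw [show (u : S) = ↑(u ^ (1 : ℤ)) by simp, hval, hval]; exact hpow _ (by omega)⟩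
    · exact ⟨1, fun a b hab => by
        rw [show (↑u⁻¹ : S) = ↑(u ^ (-1 : ℤ)) by simp, hval, hval]; exact hpow _ (by omega)⟩
  | zero => exact ⟨0, fun a b _ => by simp⟩
  | one => exact ⟨0, fun a b hab => by rw [mul_one, hval]; exact hpow _ hab⟩
  | add v w _ _ hv hw =>
    obtain ⟨N, hN⟩ := hv
    obtain ⟨M, hM⟩ := hw
    refine ⟨max N M, fun a b hab => ?_⟩
    rw [mul_add, add_mul]
    exact add_mem (hN a b (le_of_max_le_left hab)) (hM a b (le_of_max_le_right hab))
  | neg v _ hv =>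
    obtain ⟨N, hN⟩ := hv
    exact ⟨N, fun a b hab => by simpa using neg_mem (hN a b hab)⟩
  | mul v w _ _ hv hw =>
    obtain ⟨N, hN⟩ := hv
    obtain ⟨M, hM⟩ := hw
    refine ⟨N + M, fun a b hab => ?_⟩
    have hsplit : ↑(u ^ a) * (v * w) * ↑(u ^ b) =
        (↑(u ^ a) * v * ↑(u ^ (N - a))) * (↑(u ^ (a - N)) * w * ↑(u ^ b)) := by
      have : (↑(u ^ (N - a)) : S) * ↑(u ^ (a - N)) = 1 := by rw [hval]; simp
      simp only [mul_assoc]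
      rw [← mul_assoc (↑(u ^ (N - a)) : S), this, one_mul]
    rw [hsplit]
    exact mul_mem (hN _ _ (by omega)) (hM _ _ (by omega))

theorem Subring.exists_mul_pow_mem_of_closure_eq_top {S : Type*} [Ring S] (A : Subring S)
    (u : Sˣ) (hu : (u : S) ∈ A) (s : Set S) (hsA : s ⊆ A)
    (hs : ∀ r ∈ s, ↑u * r * ↑u⁻¹ ∈ s ∧ ↑u⁻¹ * r * ↑u ∈ s)
    (hgen : Subring.closure (s ∪ {↑u, ↑u⁻¹}) = ⊤) (w : S) : ∃ n : ℕ, w * ↑u ^ n ∈ A := by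
  obtain ⟨N, hN⟩ := A.exists_forall_zpow_mul_mul_zpow_mem u hu s hsA hs hgen w
  have := hN 0 N.toNat (by omega)
  rw [zpow_zero, Units.val_one, one_mul, zpow_natCast, Units.val_pow_eq_pow_val] at this
  exact ⟨N.toNat, this⟩

theorem AddSubgroup.eq_top_of_one_mem_of_mul_mem {S : Type*} [Ring S] (A : AddSubgroup S)
    {s : Set S} (hgen : Subring.closure s = ⊤) (h1 : (1 : S) ∈ A)
    (hmul : ∀ g ∈ s, ∀ w ∈ A, g * w ∈ A) : A = ⊤ := by
  have hleft (v : S) : ∀ w ∈ A, v * w ∈ A := by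
    have hv : v ∈ Subring.closure s := hgen ▸ Subring.mem_top v
    induction hv using Subring.closure_induction with
    | mem g hg => exact hmul g hg
    | zero => simp
    | one => simp
    | add v v' _ _ hv hv' => exact fun w hw => by rw [add_mul]; exact A.add_mem (hv w hw) (hv' w hw)
    | neg v _ hv => exact fun w hw => by rw [neg_mul]; exact A.neg_mem (hv w hw)
    | mul v v' _ _ hv hv' => exact fun w hw => by rw [mul_assoc]; exact hv _ (hv' w hw)
  exact (AddSubgroup.eq_top_iff' A).2 fun v => by simpa using hleft v 1 h1

theorem RingQuot.closure_range_mkRingHom_ι {X : Type*}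
    (rel : FreeAlgebra ℤ X → FreeAlgebra ℤ X → Prop) :
    Subring.closure (Set.range fun i => mkRingHom rel (FreeAlgebra.ι ℤ i)) = ⊤ := by
  have h : Subring.closure (Set.range (FreeAlgebra.ι ℤ (X := X))) = ⊤ := by
    refine (Subring.eq_top_iff' _).2 fun a => ?_
    induction a using FreeAlgebra.induction with
    | grade0 k => simp
    | grade1 i => exact Subring.subset_closure ⟨i, rfl⟩
    | mul a b ha hb => exact mul_mem ha hb
    | add a b ha hb => exact add_mem ha hb
  rw [Set.range_comp' (mkRingHom rel), ← RingHom.map_closure, h,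
    ← RingHom.range_eq_map, RingHom.range_eq_top_of_surjective _ (mkRingHom_surjective rel)]

namespace GWA

variable {R : Type u} [Ring R] {φ : R ≃+* R} {z : R}

theorem Y_mul_X : Y R φ z * X R φ z = ofBase R φ z z :=
  (map_mul _ _ _).symm.trans (RingQuot.mkRingHom_rel GWARel.yx)

theorem X_mul_Y : X R φ z * Y R φ z = ofBase R φ z (φ.symm z) :=
  (map_mul _ _ _).symm.trans (RingQuot.mkRingHom_rel GWARel.xy)

theorem X_mul_ofBase (r : R) : X R φ z * ofBase R φ z r = ofBase R φ z (φ.symm r) * X R φ z :=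
  (map_mul _ _ _).symm.trans ((RingQuot.mkRingHom_rel (GWARel.xr r)).trans (map_mul _ _ _))

theorem Y_mul_ofBase (r : R) : Y R φ z * ofBase R φ z r = ofBase R φ z (φ r) * Y R φ z :=
  (map_mul _ _ _).symm.trans ((RingQuot.mkRingHom_rel (GWARel.yr r)).trans (map_mul _ _ _))

variable (φ z) in
theorem closure_generators :
    Subring.closure (Set.range (ofBase R φ z) ∪ {X R φ z, Y R φ z}) = ⊤ := by
  rw [← RingQuot.closure_range_mkRingHom_ι (GWARel R φ z),
    ← Matrix.range_cons_cons_empty (X R φ z) (Y R φ z) ![], ← Set.Sum.elim_range]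
  congr 2
  funext i
  rcases i with r | i
  · rfl
  · fin_cases i <;> rfl

section Lift

variable {S : Type*} [Ring S] (f : R →+* S) (a b : S)

noncomputable def lift (hba : b * a = f z) (hab : a * b = f (φ.symm z))
    (ha : ∀ r, a * f r = f (φ.symm r) * a) (hb : ∀ r, b * f r = f (φ r) * b) :
    GWA R φ z →+* S :=
  RingQuot.lift ⟨(FreeAlgebra.lift ℤ (Sum.elim f ![a, b])).toRingHom, by
    rintro _ _ (_ | _ | _ | _ | _ | _ | _) <;> simp [*]⟩

variable {f a b} (hba : b * a = f z) (hab : a * b = f (φ.symm z))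
    (ha : ∀ r, a * f r = f (φ.symm r) * a) (hb : ∀ r, b * f r = f (φ r) * b)

@[simp]
theorem lift_ofBase (r : R) : lift f a b hba hab ha hb (ofBase R φ z r) = f r := by
  simp [lift, ofBase]

@[simp]
theorem lift_X : lift f a b hba hab ha hb (X R φ z) = a := by
  simp [lift, X]

@[simp]
theorem lift_Y : lift f a b hba hab ha hb (Y R φ z) = b := by
  simp [lift, Y]

end Lift

variable (R φ z) in
noncomputable def monomial (k : ℤ) : GWA R φ z :=
  if 0 ≤ k then X R φ z ^ k.toNat else Y R φ z ^ (-k).toNat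

theorem monomial_of_nonneg {k : ℤ} (hk : 0 ≤ k) : monomial R φ z k = X R φ z ^ k.toNat :=
  if_pos hk

theorem monomial_of_nonpos {k : ℤ} (hk : k ≤ 0) : monomial R φ z k = Y R φ z ^ (-k).toNat := by
  rcases hk.lt_or_eq with hk | rfl
  · exact if_neg (by omega)
  · simp [monomial]

theorem exists_X_mul_monomial (k : ℤ) :
    ∃ a, X R φ z * monomial R φ z k = ofBase R φ z a * monomial R φ z (k + 1) := by
  by_cases hk : 0 ≤ k
  · refine ⟨1, ?_⟩
    rw [monomial_of_nonneg hk, monomial_of_nonneg (by omega), map_one, one_mul, ← pow_succ']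
    congr 1
    omega
  · refine ⟨φ.symm z, ?_⟩
    rw [monomial_of_nonpos (by omega), monomial_of_nonpos (by omega),
      show (-k).toNat = (-(k + 1)).toNat + 1 by omega, pow_succ', ← mul_assoc, X_mul_Y]

theorem exists_Y_mul_monomial (k : ℤ) :
    ∃ b, Y R φ z * monomial R φ z k = ofBase R φ z b * monomial R φ z (k - 1) := by
  by_cases hk : k ≤ 0
  · refine ⟨1, ?_⟩
    rw [monomial_of_nonpos hk, monomial_of_nonpos (by omega), map_one, one_mul, ← pow_succ']
    congr 1
    omega
  · refine ⟨z, ?_⟩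
    rw [monomial_of_nonneg (by omega), monomial_of_nonneg (by omega),
      show k.toNat = (k - 1).toNat + 1 by omega, pow_succ', ← mul_assoc, Y_mul_X]

variable (R φ z) in
noncomputable def ofFinsupp : (ℤ →₀ R) →+ GWA R φ z :=
  Finsupp.liftAddHom fun k =>
    (AddMonoidHom.mulRight (monomial R φ z k)).comp (ofBase R φ z).toAddMonoidHom

theorem ofFinsupp_single (k : ℤ) (r : R) :
    ofFinsupp R φ z (Finsupp.single k r) = ofBase R φ z r * monomial R φ z k := by
  simp [ofFinsupp]

theorem ofFinsupp_surjective : Function.Surjective (ofFinsupp R φ z) := by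
  set A := (ofFinsupp R φ z).range
  have hmono (k : ℤ) (r : R) : ofBase R φ z r * monomial R φ z k ∈ A :=
    ⟨Finsupp.single k r, ofFinsupp_single k r⟩
  have hgen (g : GWA R φ z) (hg : g ∈ Set.range (ofBase R φ z) ∪ {X R φ z, Y R φ z})
      (k : ℤ) (r : R) : g * (ofBase R φ z r * monomial R φ z k) ∈ A := by
    rcases hg with ⟨s, rfl⟩ | rfl | rfl
    · rw [← mul_assoc, ← map_mul]
      exact hmono k _
    · obtain ⟨a, ha⟩ := exists_X_mul_monomial (φ := φ) (z := z) k
      rw [← mul_assoc, X_mul_ofBase, mul_assoc, ha, ← mul_assoc, ← map_mul]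
      exact hmono _ _
    · obtain ⟨b, hb⟩ := exists_Y_mul_monomial (φ := φ) (z := z) k
      rw [← mul_assoc, Y_mul_ofBase, mul_assoc, hb, ← mul_assoc, ← map_mul]
      exact hmono _ _
  refine AddMonoidHom.range_eq_top.1 (A.eq_top_of_one_mem_of_mul_mem (closure_generators φ z)
    (by simpa [monomial] using hmono 0 1) fun g hg => ?_)
  rintro _ ⟨f, rfl⟩
  induction f using Finsupp.induction_linear with
  | zero => simp
  | add f f' hf hf' => rw [map_add, mul_add]; exact A.add_mem hf hf'
  | single k r => rw [ofFinsupp_single]; exact hgen g hg k r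

end GWA

namespace TwistedLaurent

variable {R : Type u} [Ring R] {φ : R ≃+* R}

theorem x_mul_xinv : x R φ * xinv R φ = 1 :=
  (map_mul _ _ _).symm.trans ((RingQuot.mkRingHom_rel LaurentRel.xxinv).trans (map_one _))

theorem xinv_mul_x : xinv R φ * x R φ = 1 :=
  (map_mul _ _ _).symm.trans ((RingQuot.mkRingHom_rel LaurentRel.xinvx).trans (map_one _))

theorem x_mul_ofBase (r : R) : x R φ * ofBase R φ r = ofBase R φ (φ.symm r) * x R φ :=
  (map_mul _ _ _).symm.trans ((RingQuot.mkRingHom_rel (LaurentRel.xr r)).trans (map_mul _ _ _))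

theorem xinv_mul_ofBase (r : R) : xinv R φ * ofBase R φ r = ofBase R φ (φ r) * xinv R φ := by
  calc xinv R φ * ofBase R φ r = xinv R φ * (ofBase R φ r * x R φ) * xinv R φ := by
        rw [mul_assoc, mul_assoc, x_mul_xinv, mul_one]
    _ = xinv R φ * (x R φ * ofBase R φ (φ r)) * xinv R φ := by
        rw [x_mul_ofBase, φ.symm_apply_apply]
    _ = ofBase R φ (φ r) * xinv R φ := by rw [← mul_assoc, xinv_mul_x, one_mul]

theorem x_mul_ofBase_mul_xinv (r : R) :
    x R φ * ofBase R φ r * xinv R φ = ofBase R φ (φ.symm r) := by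
  rw [x_mul_ofBase, mul_assoc, x_mul_xinv, mul_one]

theorem xinv_mul_ofBase_mul_x (r : R) :
    xinv R φ * ofBase R φ r * x R φ = ofBase R φ (φ r) := by
  rw [xinv_mul_ofBase, mul_assoc, xinv_mul_x, mul_one]

variable (R φ) in
noncomputable def xUnit : (TwistedLaurent R φ)ˣ := ⟨x R φ, xinv R φ, x_mul_xinv, xinv_mul_x⟩

@[simp]
theorem val_xUnit : (xUnit R φ : TwistedLaurent R φ) = x R φ := rfl

variable (φ) in
theorem closure_generators :
    Subring.closure (Set.range (ofBase R φ) ∪ {x R φ, xinv R φ}) = ⊤ := by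
  have hx : Set.range (fun i : Bool => cond i (x R φ) (xinv R φ)) = {x R φ, xinv R φ} := by
    ext
    simp [or_comm]
  rw [← RingQuot.closure_range_mkRingHom_ι (LaurentRel R φ), ← hx, ← Set.Sum.elim_range]
  congr 2
  funext i
  rcases i with r | (_ | _) <;> rfl

theorem exists_ofBase_mul_xinv_pow_eq (M : Submonoid R) (hM : ∀ r ∈ M, φ r ∈ M) {z : R}
    (hz : z ∈ M) (n : ℕ) :
    ∃ c ∈ M, (ofBase R φ z * xinv R φ) ^ n = ofBase R φ c * xinv R φ ^ n := by
  have hiter (n : ℕ) : φ^[n] z ∈ M := by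
    induction n with
    | zero => exact hz
    | succ n ih => rw [Function.iterate_succ_apply']; exact hM _ ih
  induction n with
  | zero => exact ⟨1, M.one_mem, by simp⟩
  | succ n ih =>
    obtain ⟨c, hc, hpow⟩ := ih
    refine ⟨c * φ^[n] z, M.mul_mem hc (hiter n), ?_⟩
    rw [pow_succ, hpow, mul_assoc, ← mul_assoc (xinv R φ ^ n),
      pow_mul_eq_mul_pow_of_mul_eq _ _ _ xinv_mul_ofBase, map_mul, pow_succ]
    simp only [mul_assoc]

section Lift

variable {S : Type*} [Ring S] (f : R →+* S) (a b : S)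

noncomputable def lift (hab : a * b = 1) (hba : b * a = 1)
    (ha : ∀ r, a * f r = f (φ.symm r) * a) : TwistedLaurent R φ →+* S :=
  RingQuot.lift ⟨(FreeAlgebra.lift ℤ (Sum.elim f fun i => cond i a b)).toRingHom, by
    rintro _ _ (_ | _ | _ | _ | _ | _) <;> simp [*]⟩

variable {f a b} (hab : a * b = 1) (hba : b * a = 1) (ha : ∀ r, a * f r = f (φ.symm r) * a)

@[simp]
theorem lift_ofBase (r : R) : lift f a b hab hba ha (ofBase R φ r) = f r := by
  simp [lift, ofBase]

@[simp]
theorem lift_x : lift f a b hab hba ha (x R φ) = a := by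
  simp [lift, x]

@[simp]
theorem lift_xinv : lift f a b hab hba ha (xinv R φ) = b := by
  simp [lift, xinv]

end Lift

noncomputable def twistedShift (σ : R →+* R) (k : ℤ) : Module.End ℤ (ℤ →₀ R) :=
  Finsupp.mapRange.linearMap σ.toAddMonoidHom.toIntLinearMap ∘ₗ Finsupp.lmapDomain R ℤ (· + k)

theorem twistedShift_single (σ : R →+* R) (k m : ℤ) (s : R) :
    twistedShift σ k (Finsupp.single m s) = Finsupp.single (m + k) (σ s) := by
  simp [twistedShift]

theorem twistedShift_pow_single (σ : R →+* R) (k : ℤ) (n : ℕ) (m : ℤ) (s : R) :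
    (twistedShift σ k ^ n) (Finsupp.single m s) = Finsupp.single (m + n * k) (σ^[n] s) := by
  induction n with
  | zero => simp
  | succ n ih =>
    rw [pow_succ', Module.End.mul_apply, ih, twistedShift_single, Function.iterate_succ_apply']
    congr 1
    push_cast
    ring

/-- The left regular representation of `R_φ[x, x⁻¹]`, on its additive group written as the
coefficient sequences `ℤ →₀ R` (`single k r` stands for `r x^k`). -/
noncomputable def toEnd : TwistedLaurent R φ →+* Module.End ℤ (ℤ →₀ R) :=
  lift (Module.toModuleEnd ℤ (ℤ →₀ R)) (twistedShift φ.symm 1) (twistedShift φ (-1))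
    (Finsupp.lhom_ext fun m s => by simp [twistedShift_single])
    (Finsupp.lhom_ext fun m s => by simp [twistedShift_single])
    (fun r => Finsupp.lhom_ext fun m s => by
      simp [twistedShift_single, Finsupp.smul_single, -Finsupp.single_mul])

noncomputable def coeff : TwistedLaurent R φ →+ (ℤ →₀ R) :=
  AddMonoidHom.mk' (fun w => toEnd w (Finsupp.single 0 1)) fun a b => by simp

theorem coeff_ofBase_mul_x_pow (r : R) (n : ℕ) :
    coeff (ofBase R φ r * x R φ ^ n) = Finsupp.single (n : ℤ) r := by
  simp [coeff, toEnd, twistedShift_pow_single]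

theorem coeff_ofBase_mul_xinv_pow (r : R) (n : ℕ) :
    coeff (ofBase R φ r * xinv R φ ^ n) = Finsupp.single (-n : ℤ) r := by
  simp [coeff, toEnd, twistedShift_pow_single]

end TwistedLaurent

namespace GWA

open TwistedLaurent

variable {R : Type u} [Ring R] {φ : R ≃+* R} {z : R}

noncomputable def toTwistedLaurent (hz : z ∈ Set.center R) : GWA R φ z →+* TwistedLaurent R φ :=
  lift (TwistedLaurent.ofBase R φ) (x R φ) (TwistedLaurent.ofBase R φ z * xinv R φ)
    (by rw [mul_assoc, xinv_mul_x, mul_one])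
    (by rw [← mul_assoc, x_mul_ofBase, mul_assoc, x_mul_xinv, mul_one])
    x_mul_ofBase
    (fun r => by rw [mul_assoc, xinv_mul_ofBase, ← mul_assoc, ← map_mul, (hz.comm (φ r)).eq,
      map_mul, mul_assoc])

variable (hz : z ∈ Set.center R)

@[simp]
theorem toTwistedLaurent_ofBase (r : R) :
    toTwistedLaurent hz (ofBase R φ z r) = TwistedLaurent.ofBase R φ r :=
  lift_ofBase ..

@[simp]
theorem toTwistedLaurent_X : toTwistedLaurent hz (X R φ z) = x R φ :=
  lift_X ..

@[simp]
theorem toTwistedLaurent_Y :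
    toTwistedLaurent hz (Y R φ z) = TwistedLaurent.ofBase R φ z * xinv R φ :=
  lift_Y ..

theorem exists_coeff_toTwistedLaurent_monomial (hz' : z ∈ nonZeroDivisorsRight R) (k : ℤ) :
    ∃ c ∈ nonZeroDivisorsRight R, ∀ r : R,
      coeff (toTwistedLaurent hz (ofBase R φ z r * monomial R φ z k)) =
        Finsupp.single k (r * c) := by
  by_cases hk : 0 ≤ k
  · refine ⟨1, Submonoid.one_mem _, fun r => ?_⟩
    rw [monomial_of_nonneg hk, map_mul, map_pow, toTwistedLaurent_ofBase, toTwistedLaurent_X,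
      coeff_ofBase_mul_x_pow, Int.toNat_of_nonneg hk, mul_one]
  · obtain ⟨c, hc, hpow⟩ := exists_ofBase_mul_xinv_pow_eq (φ := φ) _
      (fun _ => φ.toMulEquiv.map_mem_nonZeroDivisorsRight) hz' (-k).toNat
    refine ⟨c, hc, fun r => ?_⟩
    rw [monomial_of_nonpos (by omega), map_mul, map_pow, toTwistedLaurent_ofBase,
      toTwistedLaurent_Y, hpow, ← mul_assoc, ← map_mul, coeff_ofBase_mul_xinv_pow]
    congr 1
    omega

theorem toTwistedLaurent_injective (hz' : z ∈ nonZeroDivisorsRight R) :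
    Function.Injective (toTwistedLaurent (φ := φ) hz) := by
  choose c hc hcoeff using exists_coeff_toTwistedLaurent_monomial (φ := φ) hz hz'
  have hcoeff_apply (f : ℤ →₀ R) (k : ℤ) :
      coeff (toTwistedLaurent hz (ofFinsupp R φ z f)) k = f k * c k := by
    induction f using Finsupp.induction_linear with
    | zero => simp
    | add f g hf hg => simp [hf, hg, add_mul]
    | single m r =>
      rw [ofFinsupp_single, hcoeff, Finsupp.single_apply, Finsupp.single_apply]
      split_ifs with h
      · rw [h]
      · rw [zero_mul]
  rw [injective_iff_map_eq_zero]
  intro v hv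
  obtain ⟨f, rfl⟩ := ofFinsupp_surjective v
  have hf : f = 0 := Finsupp.ext fun k => hc k _ (by rw [← hcoeff_apply, hv]; simp)
  rw [hf, map_zero]

theorem range_toTwistedLaurent :
    (toTwistedLaurent (φ := φ) hz).range = Subring.closure
      (Set.range (TwistedLaurent.ofBase R φ) ∪
        {x R φ, TwistedLaurent.ofBase R φ z * xinv R φ}) := by
  rw [RingHom.range_eq_map, ← closure_generators, RingHom.map_closure, Set.image_union,
    ← Set.range_comp, Set.image_pair]
  simp [Function.comp_def]

theorem exists_eq_toTwistedLaurent_mul_xinv_pow (w : TwistedLaurent R φ) :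
    ∃ (n : ℕ) (v : GWA R φ z), w = toTwistedLaurent hz v * xinv R φ ^ n := by
  obtain ⟨n, v, hv⟩ := Subring.exists_mul_pow_mem_of_closure_eq_top
    (toTwistedLaurent (φ := φ) hz).range (xUnit R φ) ⟨X R φ z, toTwistedLaurent_X hz⟩
    (Set.range (TwistedLaurent.ofBase R φ))
    (by rintro _ ⟨r, rfl⟩; exact ⟨ofBase R φ z r, toTwistedLaurent_ofBase hz r⟩)
    (by
      rintro _ ⟨r, rfl⟩
      exact ⟨⟨φ.symm r, (x_mul_ofBase_mul_xinv r).symm⟩, ⟨φ r, (xinv_mul_ofBase_mul_x r).symm⟩⟩)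
    (TwistedLaurent.closure_generators φ) w
  have hcomm : Commute (x R φ) (xinv R φ) := x_mul_xinv.trans xinv_mul_x.symm
  refine ⟨n, v, ?_⟩
  rw [hv, val_xUnit, mul_assoc, ← hcomm.mul_pow, x_mul_xinv, one_pow, mul_one]

end GWA

/-- Let `H(R, φ, z)` be a generalized Weyl algebra with `z` a central
non-zero-divisor.  Then there is an injective ring homomorphism
`θ : H(R, φ, z) → R_φ[x, x⁻¹]` to the `φ`-twisted Laurent polynomial ring which is the
identity on `R` and sends `x ↦ x`, `y ↦ z·x⁻¹`; its image is the subring generated by `R`,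
`x` and `z·x⁻¹`, and every element of `R_φ[x, x⁻¹]` has the form `h·x^{−n}` with `h` in the
image and `n ≥ 0`. -/
theorem statement5 (hz : z ∈ Set.center R)
    (hznzd : (∀ r : R, r * z = 0 → r = 0) ∧ (∀ r : R, z * r = 0 → r = 0)) :
    ∃ θ : GWA R φ z →+* TwistedLaurent R φ,
      (∀ r : R, θ (GWA.ofBase R φ z r) = TwistedLaurent.ofBase R φ r) ∧
      θ (GWA.X R φ z) = TwistedLaurent.x R φ ∧
      θ (GWA.Y R φ z) = TwistedLaurent.ofBase R φ z * TwistedLaurent.xinv R φ ∧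
      Function.Injective θ ∧
      θ.range = Subring.closure
        (Set.range (TwistedLaurent.ofBase R φ) ∪
          {TwistedLaurent.x R φ, TwistedLaurent.ofBase R φ z * TwistedLaurent.xinv R φ}) ∧
      ∀ w : TwistedLaurent R φ, ∃ (n : ℕ) (v : GWA R φ z),
        w = θ v * (TwistedLaurent.xinv R φ) ^ n :=
  ⟨GWA.toTwistedLaurent hz, GWA.toTwistedLaurent_ofBase hz, GWA.toTwistedLaurent_X hz,
    GWA.toTwistedLaurent_Y hz, GWA.toTwistedLaurent_injective hz hznzd.1,
    GWA.range_toTwistedLaurent hz, GWA.exists_eq_toTwistedLaurent_mul_xinv_pow hz⟩
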